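/- Let v, w, t ∈ Q and let 1 ≤ i, k, p ≤ m with i ≠ k and k ≠ p. For all scalars a, b, c, a', b', c' ∈ A satisfying abc = a'b'c' and a²bc = a'²b'c', the triple commutators [E*_{i,a·v}, [E_{k,b·w}, E_{p,c·t}]] and [E*_{i,a'·v}, [E_{k,b'·w}, E_{p,c'·t}]] are equal as automorphisms of M. -/

import Mathlib

open QuadraticMap
open scoped commutatorElement

/-- The DSER elementary orthogonal transformation `E_{i,w}` on `M = Q ⊕ P ⊕ P*`,
`P = A^m`:  `E_{i,w}(z,x,f) = (z − f(xᵢ)•w, x + ⟨w,z⟩•xᵢ − f(xᵢ)·q(w)•xᵢ, f)`. -/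
noncomputable def Eplus {A Q : Type*} [CommRing A] [AddCommGroup Q] [Module A Q]
    {m : ℕ} (q : QuadraticForm A Q) (i : Fin m) (w : Q) :
    (Q × (Fin m → A) × (Fin m → A)) ≃ₗ[A] (Q × (Fin m → A) × (Fin m → A)) where
  toFun p := (p.1 - p.2.2 i • w,
    p.2.1 + polar ⇑q w p.1 • (Pi.single i 1 : Fin m → A)
      - (p.2.2 i * q w) • (Pi.single i 1 : Fin m → A),
    p.2.2)
  invFun p := (p.1 + p.2.2 i • w,
    p.2.1 - polar ⇑q w p.1 • (Pi.single i 1 : Fin m → A)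
      - (p.2.2 i * q w) • (Pi.single i 1 : Fin m → A),
    p.2.2)
  map_add' p p' := by
    obtain ⟨z, x, f⟩ := p
    obtain ⟨z', x', f'⟩ := p'
    refine Prod.ext ?_ (Prod.ext ?_ rfl)
    · show z + z' - (f i + f' i) • w = (z - f i • w) + (z' - f' i • w)
      module
    · show x + x' + polar ⇑q w (z + z') • (Pi.single i 1 : Fin m → A)
        - ((f i + f' i) * q w) • (Pi.single i 1 : Fin m → A) = _
      rw [polar_add_right]
      show _ = (x + polar ⇑q w z • (Pi.single i 1 : Fin m → A) - (f i * q w) • (Pi.single i 1 : Fin m → A))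
        + (x' + polar ⇑q w z' • (Pi.single i 1 : Fin m → A) - (f' i * q w) • (Pi.single i 1 : Fin m → A))
      module
  map_smul' a p := by
    obtain ⟨z, x, f⟩ := p
    refine Prod.ext ?_ (Prod.ext ?_ rfl)
    · show a • z - (a • f) i • w = a • (z - f i • w)
      simp only [Pi.smul_apply, smul_eq_mul]
      module
    · show a • x + polar ⇑q w (a • z) • (Pi.single i 1 : Fin m → A)
        - ((a • f) i * q w) • (Pi.single i 1 : Fin m → A)
        = a • (x + polar ⇑q w z • (Pi.single i 1 : Fin m → A) - (f i * q w) • (Pi.single i 1 : Fin m → A))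
      rw [polar_smul_right]
      simp only [Pi.smul_apply, smul_eq_mul]
      module
  left_inv p := by
    obtain ⟨z, x, f⟩ := p
    refine Prod.ext ?_ (Prod.ext ?_ rfl)
    · show z - f i • w + f i • w = z
      module
    · show x + polar ⇑q w z • (Pi.single i 1 : Fin m → A) - (f i * q w) • (Pi.single i 1 : Fin m → A)
        - polar ⇑q w (z - f i • w) • (Pi.single i 1 : Fin m → A)
        - (f i * q w) • (Pi.single i 1 : Fin m → A) = x
      rw [polar_sub_right, polar_smul_right, polar_self]
      simp only [smul_eq_mul]
      module
  right_inv p := by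
    obtain ⟨z, x, f⟩ := p
    refine Prod.ext ?_ (Prod.ext ?_ rfl)
    · show z + f i • w - f i • w = z
      module
    · show x - polar ⇑q w z • (Pi.single i 1 : Fin m → A) - (f i * q w) • (Pi.single i 1 : Fin m → A)
        + polar ⇑q w (z + f i • w) • (Pi.single i 1 : Fin m → A)
        - (f i * q w) • (Pi.single i 1 : Fin m → A) = x
      rw [polar_add_right, polar_smul_right, polar_self]
      simp only [smul_eq_mul]
      module

/-- The DSER elementary orthogonal transformation `E*_{i,w}` on `M = Q ⊕ P ⊕ P*`:
`E*_{i,w}(z,x,f) = (z − fᵢ(x)•w, x, f + ⟨w,z⟩•fᵢ − fᵢ(x)·q(w)•fᵢ)`. -/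
noncomputable def Estar {A Q : Type*} [CommRing A] [AddCommGroup Q] [Module A Q]
    {m : ℕ} (q : QuadraticForm A Q) (i : Fin m) (w : Q) :
    (Q × (Fin m → A) × (Fin m → A)) ≃ₗ[A] (Q × (Fin m → A) × (Fin m → A)) where
  toFun p := (p.1 - p.2.1 i • w,
    p.2.1,
    p.2.2 + polar ⇑q w p.1 • (Pi.single i 1 : Fin m → A)
      - (p.2.1 i * q w) • (Pi.single i 1 : Fin m → A))
  invFun p := (p.1 + p.2.1 i • w,
    p.2.1,
    p.2.2 - polar ⇑q w p.1 • (Pi.single i 1 : Fin m → A)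
      - (p.2.1 i * q w) • (Pi.single i 1 : Fin m → A))
  map_add' p p' := by
    obtain ⟨z, x, f⟩ := p
    obtain ⟨z', x', f'⟩ := p'
    refine Prod.ext ?_ (Prod.ext rfl ?_)
    · show z + z' - (x i + x' i) • w = (z - x i • w) + (z' - x' i • w)
      module
    · show f + f' + polar ⇑q w (z + z') • (Pi.single i 1 : Fin m → A)
        - ((x i + x' i) * q w) • (Pi.single i 1 : Fin m → A) = _
      rw [polar_add_right]
      show _ = (f + polar ⇑q w z • (Pi.single i 1 : Fin m → A)
          - (x i * q w) • (Pi.single i 1 : Fin m → A))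
        + (f' + polar ⇑q w z' • (Pi.single i 1 : Fin m → A)
          - (x' i * q w) • (Pi.single i 1 : Fin m → A))
      module
  map_smul' a p := by
    obtain ⟨z, x, f⟩ := p
    refine Prod.ext ?_ (Prod.ext rfl ?_)
    · show a • z - (a • x) i • w = a • (z - x i • w)
      simp only [Pi.smul_apply, smul_eq_mul]
      module
    · show a • f + polar ⇑q w (a • z) • (Pi.single i 1 : Fin m → A)
        - ((a • x) i * q w) • (Pi.single i 1 : Fin m → A)
        = a • (f + polar ⇑q w z • (Pi.single i 1 : Fin m → A)
          - (x i * q w) • (Pi.single i 1 : Fin m → A))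
      rw [polar_smul_right]
      simp only [Pi.smul_apply, smul_eq_mul]
      module
  left_inv p := by
    obtain ⟨z, x, f⟩ := p
    refine Prod.ext ?_ (Prod.ext rfl ?_)
    · show z - x i • w + x i • w = z
      module
    · show f + polar ⇑q w z • (Pi.single i 1 : Fin m → A)
        - (x i * q w) • (Pi.single i 1 : Fin m → A)
        - polar ⇑q w (z - x i • w) • (Pi.single i 1 : Fin m → A)
        - (x i * q w) • (Pi.single i 1 : Fin m → A) = f
      rw [polar_sub_right, polar_smul_right, polar_self]
      simp only [smul_eq_mul]
      module
  right_inv p := by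
    obtain ⟨z, x, f⟩ := p
    refine Prod.ext ?_ (Prod.ext rfl ?_)
    · show z + x i • w - x i • w = z
      module
    · show f - polar ⇑q w z • (Pi.single i 1 : Fin m → A)
        - (x i * q w) • (Pi.single i 1 : Fin m → A)
        + polar ⇑q w (z + x i • w) • (Pi.single i 1 : Fin m → A)
        - (x i * q w) • (Pi.single i 1 : Fin m → A) = f
      rw [polar_add_right, polar_smul_right, polar_self]
      simp only [smul_eq_mul]
      module


/-! The commutator `⁅E_{k,w}, E_{p,t}⁆` is the transvection
`x ↦ x + ⟨w,t⟩ • (f k • e_p - f p • e_k)` (the identity when `k = p`), so it sees `w, t`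
only through `⟨w,t⟩`. Commuting it with `E*_{i,u}` gives the identity unless `i = p`; for
`i = p` the result is an explicit map whose coefficients, once `u = a • v`, `w ↦ b • w`,
`t ↦ c • t`, are polynomials in `abc` and `a²bc`. -/

section
variable {A Q : Type*} [CommRing A] [AddCommGroup Q] [Module A Q] {m : ℕ}
  (q : QuadraticForm A Q) (z : Q) (x f : Fin m → A)

lemma Eplus_apply (i : Fin m) (w : Q) : Eplus q i w (z, x, f) =
    (z - f i • w, x + polar q w z • Pi.single i 1 - (f i * q w) • Pi.single i 1, f) := rfl

lemma Eplus_symm_apply (i : Fin m) (w : Q) : (Eplus q i w).symm (z, x, f) =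
    (z + f i • w, x - polar q w z • Pi.single i 1 - (f i * q w) • Pi.single i 1, f) := rfl

lemma Estar_apply (i : Fin m) (w : Q) : Estar q i w (z, x, f) =
    (z - x i • w, x, f + polar q w z • Pi.single i 1 - (x i * q w) • Pi.single i 1) := rfl

lemma Estar_symm_apply (i : Fin m) (w : Q) : (Estar q i w).symm (z, x, f) =
    (z + x i • w, x, f - polar q w z • Pi.single i 1 - (x i * q w) • Pi.single i 1) := rfl

lemma commutator_Eplus_Eplus_apply (k p : Fin m) (w t : Q) :
    ⁅Eplus q k w, Eplus q p t⁆ (z, x, f) =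
      (z, x + polar q w t • (f k • Pi.single p 1 - f p • Pi.single k 1), f) := by
  simp only [commutatorElement_def, LinearEquiv.mul_apply, LinearEquiv.coe_inv]
  simp only [Eplus_apply, Eplus_symm_apply, Prod.mk.injEq]
  refine ⟨by abel, ?_, trivial⟩
  simp only [polar_add_right, polar_sub_right, polar_smul_right, polar_self, polar_comm _ t w]
  module

lemma commutator_Estar_commutator_Eplus_Eplus_apply {k p : Fin m} (hkp : k ≠ p)
    (u w t : Q) :
    ⁅Estar q p u, ⁅Eplus q k w, Eplus q p t⁆⁆ (z, x, f) =
      (z - (polar q w t * f k) • u,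
        x + (polar q w t * (polar q u z + (x p - polar q w t * f k) * q u)) • Pi.single k 1,
        f - (polar q w t * f k * q u) • Pi.single p 1) := by
  rw [commutatorElement_def]
  simp only [LinearEquiv.mul_apply, LinearEquiv.coe_inv, commutatorElement_inv]
  simp only [Estar_apply, Estar_symm_apply, commutator_Eplus_Eplus_apply, Prod.mk.injEq]
  simp only [Pi.add_apply, Pi.sub_apply, Pi.smul_apply, smul_eq_mul, Pi.single_eq_same,
    Pi.single_eq_of_ne hkp, Pi.single_eq_of_ne hkp.symm, polar_add_right, polar_smul_right,
    polar_self, polar_comm _ t w]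
  refine ⟨?_, ?_, ?_⟩ <;> module

lemma commutator_Estar_commutator_Eplus_Eplus_eq_one {i k p : Fin m} (hik : i ≠ k) (hip : i ≠ p)
    (u w t : Q) : ⁅Estar q i u, ⁅Eplus q k w, Eplus q p t⁆⁆ = 1 := by
  refine LinearEquiv.ext fun ⟨z, x, f⟩ => ?_
  rw [commutatorElement_def]
  simp only [LinearEquiv.mul_apply, LinearEquiv.coe_inv, commutatorElement_inv]
  simp only [Estar_apply, Estar_symm_apply, commutator_Eplus_Eplus_apply, LinearEquiv.coe_one,
    id, Prod.mk.injEq]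
  simp only [Pi.add_apply, Pi.sub_apply, Pi.smul_apply, smul_eq_mul, Pi.single_eq_of_ne hik,
    Pi.single_eq_of_ne hik.symm, Pi.single_eq_of_ne hip, Pi.single_eq_of_ne hip.symm,
    polar_add_right, polar_smul_right, polar_self, polar_comm _ t w]
  refine ⟨?_, ?_, ?_⟩ <;> module

lemma commutator_Estar_smul_commutator_Eplus_smul_apply {k p : Fin m} (hkp : k ≠ p)
    (a b c : A) (v w t : Q) :
    ⁅Estar q p (a • v), ⁅Eplus q k (b • w), Eplus q p (c • t)⁆⁆ (z, x, f) =
      (z - (a * b * c * polar q w t * f k) • v,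
        x + (a * b * c * polar q w t * polar q v z + a ^ 2 * b * c * polar q w t * x p * q v
          - (a * b * c) ^ 2 * polar q w t ^ 2 * f k * q v) • Pi.single k 1,
        f - (a ^ 2 * b * c * polar q w t * f k * q v) • Pi.single p 1) := by
  rw [commutator_Estar_commutator_Eplus_Eplus_apply q z x f hkp]
  simp only [polar_smul_left, polar_smul_right, QuadraticMap.map_smul, smul_eq_mul, Prod.mk.injEq]
  refine ⟨?_, ?_, ?_⟩ <;> module

end

theorem triple_commutator_Estar_EplusEplus_scaling_general
    {A Q : Type*} [CommRing A] [AddCommGroup Q] [Module A Q]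
    {m : ℕ} (q : QuadraticForm A Q) (i k p : Fin m)
    (hik : i ≠ k) (v w t : Q)
    (a b c a' b' c' : A) (h1 : a * b * c = a' * b' * c')
    (h2 : a ^ 2 * b * c = a' ^ 2 * b' * c') :
    ⁅Estar q i (a • v), ⁅Eplus q k (b • w), Eplus q p (c • t)⁆⁆
      = ⁅Estar q i (a' • v), ⁅Eplus q k (b' • w), Eplus q p (c' • t)⁆⁆ := by
  rcases eq_or_ne i p with rfl | hip
  · refine LinearEquiv.ext fun ⟨z, x, f⟩ => ?_
    rw [commutator_Estar_smul_commutator_Eplus_smul_apply q z x f hik.symm,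
      commutator_Estar_smul_commutator_Eplus_smul_apply q z x f hik.symm, h1, h2]
  · rw [commutator_Estar_commutator_Eplus_Eplus_eq_one q hik hip,
      commutator_Estar_commutator_Eplus_Eplus_eq_one q hik hip]

theorem triple_commutator_Estar_EplusEplus_scaling
    {A Q : Type*} [CommRing A] [Invertible (2 : A)] [AddCommGroup Q] [Module A Q]
    {m : ℕ} (q : QuadraticForm A Q) (i k p : Fin m)
    (hik : i ≠ k) (hkp : k ≠ p) (v w t : Q)
    (a b c a' b' c' : A) (h1 : a * b * c = a' * b' * c')
    (h2 : a ^ 2 * b * c = a' ^ 2 * b' * c') :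
    ⁅Estar q i (a • v), ⁅Eplus q k (b • w), Eplus q p (c • t)⁆⁆
      = ⁅Estar q i (a' • v), ⁅Eplus q k (b' • w), Eplus q p (c' • t)⁆⁆ :=
  triple_commutator_Estar_EplusEplus_scaling_general q i k p hik v w t a b c a' b' c' h1 h2
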